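/- arXiv:1407.5636 — 3 statements merged into one kernel-verified Lean document; each statement's English description precedes it below -/
import Mathlib

section
/- For all n ≥ 3, with ℓ = n(n−1)/2: for every j ∈ {1,…,n−2} and every position k ∈ {1,…,ℓ−1}, the number of reduced words i₁⋯i_ℓ for the longest element w₀ ∈ S_n with i_k = j and i_{k+1} = j+1 equals the number of reduced words for w₀ with i₁ = j and i₂ = j+1 (i.e., this count is independent of the position k). -/
open scoped Classical


/-- The adjacent transposition `sᵢ ∈ S_n` swapping `i` and `i+1` (one-based),
for `i ∈ {1, …, n-1}`; junk value `1` otherwise. -/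
def simpleRefl (n i : ℕ) : Equiv.Perm (Fin n) :=
  if h : 1 ≤ i ∧ i < n then Equiv.swap ⟨i - 1, by omega⟩ ⟨i, h.2⟩ else 1

/-- The product `s_{i₁} ⋯ s_{i_m}` of the word `i₁ ⋯ i_m`. -/
def wordProd (n : ℕ) (l : List ℕ) : Equiv.Perm (Fin n) :=
  (l.map (simpleRefl n)).prod

/-- `l` is a word for `w`: letters in `{1, …, n-1}` and product `w`. -/
def IsWordFor (n : ℕ) (w : Equiv.Perm (Fin n)) (l : List ℕ) : Prop :=
  (∀ i ∈ l, 1 ≤ i ∧ i ≤ n - 1) ∧ wordProd n l = w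

/-- `l` is a reduced word for `w`: a word for `w` of minimal length. -/
def IsReducedWordFor (n : ℕ) (w : Equiv.Perm (Fin n)) (l : List ℕ) : Prop :=
  IsWordFor n w l ∧ ∀ l', IsWordFor n w l' → l.length ≤ l'.length

/-- The longest element `w₀ ∈ S_n`, `w₀(i) = n + 1 - i` in one-line notation. -/
def w₀ (n : ℕ) : Equiv.Perm (Fin n) := Fin.revPerm

/-- The number of positions of the word `l` supporting a commutation,
i.e. positions `k` with `|i_k - i_{k+1}| > 1`. -/
def commCount (l : List ℕ) : ℕ :=
  ((Finset.range (l.length - 1)).filter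
    (fun k => 1 < |(l.getD k 0 : ℤ) - (l.getD (k+1) 0 : ℤ)|)).card

/-- The number of consecutive noncommuting pairs in the word `l`,
i.e. positions `k` with `|i_k - i_{k+1}| = 1`. -/
def noncommCount (l : List ℕ) : ℕ :=
  ((Finset.range (l.length - 1)).filter
    (fun k => |(l.getD k 0 : ℤ) - (l.getD (k+1) 0 : ℤ)| = 1)).card

/-- The number of positions of `l` supporting a long braid move, i.e. positions `k`
with `(i_k, i_{k+1}, i_{k+2})` of the form `(i, i+1, i)` or `(i+1, i, i+1)`. -/
noncomputable def braidCount (l : List ℕ) : ℕ :=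
  ((Finset.range (l.length - 2)).filter
    (fun k => ∃ i : ℕ,
      (l.getD k 0, l.getD (k+1) 0, l.getD (k+2) 0) = (i, i+1, i) ∨
      (l.getD k 0, l.getD (k+1) 0, l.getD (k+2) 0) = (i+1, i, i+1))).card

/-!
Since `sₐ w₀ = w₀ s_{n-a}`, moving the first letter `a` of a reduced word for `w₀` to the end,
as `n - a`, gives again a reduced word for `w₀`. This rotation is a bijection of the set of
reduced words for `w₀` that shifts every letter but the first one place to the left. Every word
for `w₀` has length at least `ℓ`, the number of inversions of `w₀`, because each simple
reflection changes the number of inversions by at most one. Hence, as long as the pair at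
positions `k + 1, k + 2` stays off the last position, the rotation matches the reduced words
with the pair there with those having it at positions `k, k + 1`.
-/

open Finset

lemma Set.BijOn.inter_of_mem_iff {α β : Type*} {f : α → β} {s s' : Set α} {t t' : Set β}
    (h : Set.BijOn f s t) (hmem : ∀ x ∈ s, x ∈ s' ↔ f x ∈ t') :
    Set.BijOn f (s ∩ s') (t ∩ t') :=
  ⟨fun x hx => ⟨h.mapsTo hx.1, (hmem x hx.1).1 hx.2⟩, h.injOn.mono Set.inter_subset_left,
    fun _ hy =>
      let ⟨x, hx, hxy⟩ := h.surjOn hy.1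
      ⟨x, ⟨hx, (hmem x hx).2 (hxy ▸ hy.2)⟩, hxy⟩⟩

section ReducedWords

variable {n : ℕ}

lemma simpleRefl_mul_self (a : ℕ) : simpleRefl n a * simpleRefl n a = 1 := by
  unfold simpleRefl
  split_ifs
  exacts [Equiv.swap_mul_self _ _, one_mul 1]

lemma simpleRefl_inv (a : ℕ) : (simpleRefl n a)⁻¹ = simpleRefl n a :=
  inv_eq_of_mul_eq_one_right (simpleRefl_mul_self a)

lemma simpleRefl_apply_val {a : ℕ} (h1 : 1 ≤ a) (h2 : a < n) (z : Fin n) :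
    (simpleRefl n a z : ℕ) = if (z : ℕ) = a - 1 then a else if (z : ℕ) = a then a - 1 else z := by
  simp only [simpleRefl, dif_pos (And.intro h1 h2), Equiv.swap_apply_def, Fin.ext_iff]
  split_ifs <;> rfl

lemma simpleRefl_mul_w₀ {a : ℕ} (h1 : 1 ≤ a) (h2 : a < n) :
    simpleRefl n a * w₀ n = w₀ n * simpleRefl n (n - a) := by
  ext x
  simp only [Equiv.Perm.mul_apply, w₀, Fin.revPerm_apply]
  rw [simpleRefl_apply_val h1 h2, Fin.val_rev, Fin.val_rev,
    simpleRefl_apply_val (by omega) (by omega)]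
  split_ifs <;> omega

lemma wordProd_cons (a : ℕ) (t : List ℕ) :
    wordProd n (a :: t) = simpleRefl n a * wordProd n t := by
  simp [wordProd]

lemma wordProd_append_singleton (t : List ℕ) (b : ℕ) :
    wordProd n (t ++ [b]) = wordProd n t * simpleRefl n b := by
  simp [wordProd]

def inversions (w : Equiv.Perm (Fin n)) : Finset (Fin n × Fin n) :=
  univ.filter fun p => p.1 < p.2 ∧ w p.2 < w p.1

lemma inversions_one : inversions (1 : Equiv.Perm (Fin n)) = ∅ := by
  rw [inversions, filter_eq_empty_iff]
  exact fun _ _ h => lt_asymm h.1 h.2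

lemma card_inversions_w₀ : #(inversions (w₀ n)) = n * (n - 1) / 2 := by
  have : inversions (w₀ n) = univ.filter fun p : Fin n × Fin n => p.1 < p.2 := by
    ext p
    simp [inversions, w₀]
  rw [this, Fintype.card_product_filter_lt, Fintype.card_fin, Nat.choose_two_right]

/-- `sₐ` only swaps the adjacent values `a - 1` and `a`, so it preserves the relative order of
every other pair of values. -/
lemma inversions_simpleRefl_mul_subset {a : ℕ} (h1 : 1 ≤ a) (h2 : a < n)
    (w : Equiv.Perm (Fin n)) :
    inversions (simpleRefl n a * w) ⊆
      insert (w⁻¹ ⟨a - 1, by omega⟩, w⁻¹ ⟨a, h2⟩) (inversions w) := by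
  rintro ⟨p, q⟩ hpq
  rw [inversions, mem_filter] at hpq
  obtain ⟨-, hlt, hinv⟩ := hpq
  simp only [inversions, mem_insert, mem_filter, mem_univ, true_and, Prod.mk.injEq]
  simp only [Equiv.Perm.mul_apply] at hinv
  by_cases hpair : (w p : ℕ) = a - 1 ∧ (w q : ℕ) = a
  · left
    constructor <;> rw [Equiv.Perm.eq_inv_iff_eq, Fin.ext_iff]
    exacts [hpair.1, hpair.2]
  · right
    have hne : (w p : ℕ) ≠ w q := fun h => hlt.ne (w.injective (Fin.ext h))
    rw [Fin.lt_def, simpleRefl_apply_val h1 h2, simpleRefl_apply_val h1 h2] at hinv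
    refine ⟨hlt, Fin.lt_def.2 ?_⟩
    split_ifs at hinv <;> omega

lemma card_inversions_simpleRefl_mul_le (a : ℕ) (w : Equiv.Perm (Fin n)) :
    #(inversions (simpleRefl n a * w)) ≤ #(inversions w) + 1 := by
  by_cases ha : 1 ≤ a ∧ a < n
  · exact (card_le_card (inversions_simpleRefl_mul_subset ha.1 ha.2 w)).trans
      (card_insert_le _ _)
  · simp [simpleRefl, ha]

lemma card_inversions_wordProd_le (l : List ℕ) : #(inversions (wordProd n l)) ≤ l.length := by
  induction l with
  | nil => simp [wordProd, inversions_one]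
  | cons a t ih =>
    rw [wordProd_cons, List.length_cons]
    exact (card_inversions_simpleRefl_mul_le a _).trans (by omega)

lemma IsWordFor.le_length_of_w₀ {l : List ℕ} (h : IsWordFor n (w₀ n) l) :
    n * (n - 1) / 2 ≤ l.length := by
  simpa [h.2, card_inversions_w₀] using card_inversions_wordProd_le (n := n) l

lemma isWordFor_w₀_cons_iff {a : ℕ} (h1 : 1 ≤ a) (h2 : a < n) (t : List ℕ) :
    IsWordFor n (w₀ n) (a :: t) ↔ IsWordFor n (w₀ n) (t ++ [n - a]) := by
  have hletters : (∀ i ∈ a :: t, 1 ≤ i ∧ i ≤ n - 1) ↔ ∀ i ∈ t ++ [n - a], 1 ≤ i ∧ i ≤ n - 1 := by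
    have hfirst : (1 ≤ a ∧ a ≤ n - 1) ↔ (1 ≤ n - a ∧ n - a ≤ n - 1) := by omega
    rw [List.forall_mem_cons, List.forall_mem_append, List.forall_mem_singleton, hfirst, and_comm]
  rw [IsWordFor, IsWordFor, hletters, wordProd_cons, wordProd_append_singleton,
    ← eq_inv_mul_iff_mul_eq, ← eq_mul_inv_iff_mul_eq, simpleRefl_inv, simpleRefl_inv,
    simpleRefl_mul_w₀ h1 h2]

lemma isReducedWordFor_w₀_cons_iff {a : ℕ} (h1 : 1 ≤ a) (h2 : a < n) (t : List ℕ) :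
    IsReducedWordFor n (w₀ n) (a :: t) ↔ IsReducedWordFor n (w₀ n) (t ++ [n - a]) := by
  simp only [IsReducedWordFor, isWordFor_w₀_cons_iff h1 h2, List.length_cons,
    List.length_append, List.length_nil, zero_add]

def rotateWord (n : ℕ) : List ℕ → List ℕ
  | [] => []
  | a :: t => t ++ [n - a]

lemma getD_rotateWord {l : List ℕ} {i : ℕ} (hi : i + 1 < l.length) (d : ℕ) :
    (rotateWord n l).getD i d = l.getD (i + 1) d := by
  cases l with
  | nil => simp at hi
  | cons a t =>
    simp only [List.length_cons] at hi
    rw [rotateWord, List.getD_append _ _ _ _ (by omega), List.getD_cons_succ]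

lemma bijOn_rotateWord :
    Set.BijOn (rotateWord n) {l | IsReducedWordFor n (w₀ n) l}
      {l | IsReducedWordFor n (w₀ n) l} := by
  have head_bounds {a : ℕ} {t : List ℕ} (h : IsReducedWordFor n (w₀ n) (a :: t)) :
      1 ≤ a ∧ a < n := by
    have := h.1.1 a List.mem_cons_self
    omega
  refine ⟨?_, ?_, ?_⟩
  · rintro (_ | ⟨a, t⟩) h
    · exact h
    · obtain ⟨h1, h2⟩ := head_bounds h
      exact (isReducedWordFor_w₀_cons_iff h1 h2 t).1 h
  · rintro (_ | ⟨a, t⟩) h (_ | ⟨a', t'⟩) h' heq <;> simp only [rotateWord] at heq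
    · rfl
    · simp at heq
    · simp at heq
    · obtain ⟨rfl, hlast⟩ := List.append_inj' heq rfl
      have := head_bounds h
      have := head_bounds h'
      have : n - a = n - a' := by simpa using hlast
      congr 1
      omega
  · intro l hl
    rcases List.eq_nil_or_concat' l with rfl | ⟨t, b, rfl⟩
    · exact ⟨[], hl, rfl⟩
    · have hb := hl.1.1 b (by simp)
      have hnb : n - (n - b) = b := by omega
      refine ⟨(n - b) :: t, ?_, by rw [rotateWord, hnb]⟩
      rw [Set.mem_ofPred_eq, isReducedWordFor_w₀_cons_iff (by omega) (by omega), hnb]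
      exact hl

lemma card_reducedWord_w₀_getD_succ (x y p : ℕ) (hp : p + 2 < n * (n - 1) / 2) :
    Nat.card {l : List ℕ // IsReducedWordFor n (w₀ n) l ∧
        l.getD (p + 1) 0 = x ∧ l.getD (p + 2) 0 = y} =
      Nat.card {l : List ℕ // IsReducedWordFor n (w₀ n) l ∧
        l.getD p 0 = x ∧ l.getD (p + 1) 0 = y} := by
  refine Nat.card_congr (Set.BijOn.equiv _ (bijOn_rotateWord.inter_of_mem_iff
    (s' := {l | l.getD (p + 1) 0 = x ∧ l.getD (p + 2) 0 = y})
    (t' := {l | l.getD p 0 = x ∧ l.getD (p + 1) 0 = y}) fun l hl => ?_))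
  have hlen := IsWordFor.le_length_of_w₀ hl.1
  simp only [Set.mem_ofPred_eq]
  rw [getD_rotateWord (i := p) (by omega), getD_rotateWord (i := p + 1) (by omega)]

lemma card_reducedWord_w₀_getD (x y p : ℕ) (hp : p + 1 < n * (n - 1) / 2) :
    Nat.card {l : List ℕ // IsReducedWordFor n (w₀ n) l ∧
        l.getD p 0 = x ∧ l.getD (p + 1) 0 = y} =
      Nat.card {l : List ℕ // IsReducedWordFor n (w₀ n) l ∧
        l.getD 0 0 = x ∧ l.getD 1 0 = y} := by
  induction p with
  | zero => rfl
  | succ p ih => rw [card_reducedWord_w₀_getD_succ x y p hp, ih (by omega)]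

end ReducedWords

theorem ascending_pair_position_independent_general (n : ℕ) (ℓ : ℕ)
    (hℓ : ℓ = n * (n - 1) / 2) (j k : ℕ)
    (hk1 : 1 ≤ k) (hk2 : k ≤ ℓ - 1) :
    Nat.card {l : List ℕ // IsReducedWordFor n (w₀ n) l ∧
        l.getD (k - 1) 0 = j ∧ l.getD k 0 = j + 1} =
      Nat.card {l : List ℕ // IsReducedWordFor n (w₀ n) l ∧
        l.getD 0 0 = j ∧ l.getD 1 0 = j + 1} := by
  obtain ⟨p, rfl⟩ := Nat.exists_eq_add_of_le' hk1
  exact card_reducedWord_w₀_getD j (j + 1) p (by omega)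

/-- For `j ∈ {1, …, n-2}` and any position `k ∈ {1, …, ℓ-1}`, the number of reduced
words for `w₀ ∈ S_n` with `i_k = j` and `i_(k+1) = j+1` equals the number with
`i₁ = j` and `i₂ = j+1`; the count is independent of the position `k`. -/
theorem ascending_pair_position_independent (n : ℕ) (hn : 3 ≤ n) (ℓ : ℕ)
    (hℓ : ℓ = n * (n - 1) / 2) (j k : ℕ) (hj1 : 1 ≤ j) (hj2 : j ≤ n - 2)
    (hk1 : 1 ≤ k) (hk2 : k ≤ ℓ - 1) :
    Nat.card {l : List ℕ // IsReducedWordFor n (w₀ n) l ∧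
        l.getD (k - 1) 0 = j ∧ l.getD k 0 = j + 1} =
      Nat.card {l : List ℕ // IsReducedWordFor n (w₀ n) l ∧
        l.getD 0 0 = j ∧ l.getD 1 0 = j + 1} :=
  ascending_pair_position_independent_general n ℓ hℓ j k hk1 hk2
end

section
/- For all n ≥ 3 and all j ∈ {1,…,n−2}, the permutation a_n^{(j)} = s_{j+1} s_j w₀ ∈ S_n is vexillary, i.e., it avoids the pattern 2143. -/
open scoped Classical


/-- The cells of the Young diagram of the partition whose parts form the multiset `M`
(rows and columns zero-indexed; cell `(i, j)` is present iff column `j` has height `> i`,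
i.e. iff row `i` of the weakly decreasing rearrangement of `M` has length `> j`). -/
def cellsOf (M : Multiset ℕ) : Set (ℕ × ℕ) :=
  {p | p.1 < (M.filter (fun m => p.2 < m)).card}

/-- `T` is a standard Young tableau of the shape with parts `M`: it vanishes off the
diagram, takes each value `1, …, |M|` exactly once on the diagram, and increases
along rows and down columns. -/
def IsSYT (M : Multiset ℕ) (T : ℕ × ℕ → ℕ) : Prop :=
  (∀ p, p ∉ cellsOf M → T p = 0) ∧
  (∀ m, 1 ≤ m → m ≤ M.sum → ∃! p, p ∈ cellsOf M ∧ T p = m) ∧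
  (∀ i j, (i, j + 1) ∈ cellsOf M → T (i, j) < T (i, j + 1)) ∧
  (∀ i j, (i + 1, j) ∈ cellsOf M → T (i, j) < T (i + 1, j))

/-- `f^λ`, the number of standard Young tableaux of the shape with parts `M`. -/
noncomputable def sytCount (M : Multiset ℕ) : ℕ := Nat.card {T // IsSYT M T}

/-- The partition `λ(w)`: the (weakly decreasing rearrangement of the) multiset of the
numbers `rᵢ = #{j < i : w(j) > w(i)}`, zero parts discarded. -/
def shapeOf (n : ℕ) (w : Equiv.Perm (Fin n)) : Multiset ℕ :=
  (Multiset.ofList (List.ofFn (fun i : Fin n =>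
    (Finset.univ.filter (fun j : Fin n => j < i ∧ w i < w j)).card))).filter
    (fun r => 0 < r)

/-- The staircase partition `δ_n = (n-1, n-2, …, 2, 1)`. -/
def staircase (n : ℕ) : Multiset ℕ :=
  Multiset.ofList ((List.range (n - 1)).map (fun i => i + 1))

/-- `w` is vexillary: it avoids the pattern 2143. -/
def Vexillary (n : ℕ) (w : Equiv.Perm (Fin n)) : Prop :=
  ¬ ∃ i₁ i₂ i₃ i₄ : Fin n, i₁ < i₂ ∧ i₂ < i₃ ∧ i₃ < i₄ ∧
    w i₂ < w i₁ ∧ w i₁ < w i₄ ∧ w i₄ < w i₃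


/-- For `n ≥ 3` and `j ∈ {1, …, n-2}`, the permutation `a_n^(j) = s_(j+1) s_j w₀ ∈ S_n`
is vexillary, i.e. it avoids the pattern 2143. -/
theorem a_n_j_vexillary (n : ℕ) (hn : 3 ≤ n) (j : ℕ) (hj1 : 1 ≤ j) (hj2 : j ≤ n - 2) :
    Vexillary n (simpleRefl n (j + 1) * simpleRefl n j * w₀ n) := by
  rintro ⟨i₁, i₂, i₃, i₄, h12, h23, h34, hb, hc, hd⟩
  set w := simpleRefl n (j + 1) * simpleRefl n j * w₀ n with hw
  have key : ∀ i : Fin n, n ≤ (w i : ℕ) + (i : ℕ) + 2 ∧ (w i : ℕ) + (i : ℕ) ≤ n + 1 := by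
    intro i
    have h1 : (1 ≤ j + 1 ∧ j + 1 < n) := by omega
    have h2 : (1 ≤ j ∧ j < n) := by omega
    have hwv : w i = Equiv.swap ⟨j, by omega⟩ ⟨j + 1, by omega⟩
        (Equiv.swap ⟨j - 1, by omega⟩ ⟨j, by omega⟩ (Fin.rev i)) := by
      rw [hw]; unfold simpleRefl; rw [dif_pos h1, dif_pos h2]; rfl
    have hrv : ((Fin.rev i : Fin n) : ℕ) = n - 1 - (i : ℕ) := by
      simp [Fin.val_rev]; omega
    have hi : (i : ℕ) < n := i.isLt
    rcases eq_or_ne ((Fin.rev i : Fin n) : ℕ) (j - 1) with hv | hv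
    · have he : (Fin.rev i : Fin n) = ⟨j - 1, by omega⟩ := Fin.ext hv
      rw [he, Equiv.swap_apply_left, Equiv.swap_apply_left] at hwv
      rw [hwv]; simp only [Fin.val_mk]; omega
    · rcases eq_or_ne ((Fin.rev i : Fin n) : ℕ) j with hv2 | hv2
      · have he : (Fin.rev i : Fin n) = ⟨j, by omega⟩ := Fin.ext hv2
        have e1 : (⟨j - 1, by omega⟩ : Fin n) ≠ ⟨j, by omega⟩ :=
          by simp only [ne_eq, Fin.mk.injEq, Fin.ext_iff]; omega
        have e2 : (⟨j - 1, by omega⟩ : Fin n) ≠ ⟨j + 1, by omega⟩ :=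
          by simp only [ne_eq, Fin.mk.injEq, Fin.ext_iff]; omega
        rw [he, Equiv.swap_apply_right, Equiv.swap_apply_of_ne_of_ne e1 e2] at hwv
        rw [hwv]; simp only [Fin.val_mk]; omega
      · rcases eq_or_ne ((Fin.rev i : Fin n) : ℕ) (j + 1) with hv3 | hv3
        · have he : (Fin.rev i : Fin n) = ⟨j + 1, by omega⟩ := Fin.ext hv3
          have e1 : (⟨j + 1, by omega⟩ : Fin n) ≠ ⟨j - 1, by omega⟩ :=
            by simp only [ne_eq, Fin.mk.injEq, Fin.ext_iff]; omega
          have e2 : (⟨j + 1, by omega⟩ : Fin n) ≠ ⟨j, by omega⟩ :=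
            by simp only [ne_eq, Fin.mk.injEq, Fin.ext_iff]; omega
          rw [he, Equiv.swap_apply_of_ne_of_ne e1 e2, Equiv.swap_apply_right] at hwv
          rw [hwv]; simp only [Fin.val_mk]; omega
        · have e1 : Fin.rev i ≠ (⟨j - 1, by omega⟩ : Fin n) :=
            by simp only [ne_eq, Fin.mk.injEq, Fin.ext_iff]; omega
          have e2 : Fin.rev i ≠ (⟨j, by omega⟩ : Fin n) :=
            by simp only [ne_eq, Fin.mk.injEq, Fin.ext_iff]; omega
          have e3 : Fin.rev i ≠ (⟨j + 1, by omega⟩ : Fin n) :=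
            by simp only [ne_eq, Fin.mk.injEq, Fin.ext_iff]; omega
          rw [Equiv.swap_apply_of_ne_of_ne e1 e2,
            Equiv.swap_apply_of_ne_of_ne e2 e3] at hwv
          rw [hwv]; omega
  have k1 := (key i₁).1
  have k4 := (key i₄).2
  rw [Fin.lt_iff_val_lt_val] at h12 h23 h34 hc
  omega
end

section
/- Define σ_n^{(j)} = (1/(3·(n choose 2)·2^{2n−7})) · [(2j−1)!!/(j−1)!] · [(2j+1)!!/j!] · [(2n−2j−3)!!/(n−j−2)!] · [(2n−2j−1)!!/(n−j−1)!]. There exists a constant C > 0 such that for all n ≥ 3 and all j ∈ {1,…,n−2}, | σ_n^{(j)} − (256/(3π²)) · j(n−j)/n² | ≤ C/n. -/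
open scoped Classical


/-- `σ_n^(j)`, the summand in the expected number of consecutive noncommuting pairs. -/
noncomputable def sigmaTerm (n j : ℕ) : ℝ :=
  1 / (3 * (n.choose 2 : ℝ) * (2 : ℝ) ^ ((2 * n : ℤ) - 7)) *
    (((2 * j - 1).doubleFactorial : ℝ) / ((j - 1).factorial : ℝ)) *
    (((2 * j + 1).doubleFactorial : ℝ) / (j.factorial : ℝ)) *
    (((2 * n - 2 * j - 3).doubleFactorial : ℝ) / ((n - j - 2).factorial : ℝ)) *
    (((2 * n - 2 * j - 1).doubleFactorial : ℝ) / ((n - j - 1).factorial : ℝ))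

/-!
The product `(2k-1)!!/(k-1)! · (2k+1)!!/k!` equals `k 4^k / W k`, where `W k` is the `k`-th partial
Wallis product, so with `n = j + m + 1` we get `σ_n^(j) = 64 j m / (3 n (n-1) W j W m)`. Wallis'
bounds `(2k+1)/(2k+2) · π/2 ≤ W k ≤ π/2` pin `π k / W k` between `2k` and `2k+1`, and replacing it
by `2k` for `k = j, m` moves `σ_n^(j)` by `O(1/n)` and turns it into `(256/(3π²)) j (m+1)/n²`.
-/

open Nat Real

theorem Nat.factorial_two_mul_eq_doubleFactorial (k : ℕ) :
    (2 * k)! = 2 ^ k * k ! * (2 * k - 1)‼ := by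
  rcases k with _ | k
  · rfl
  · rw [show 2 * (k + 1) = (2 * k + 1) + 1 by ring, factorial_eq_mul_doubleFactorial,
      show 2 * k + 1 + 1 = 2 * (k + 1) by ring, doubleFactorial_two_mul]
    rfl

theorem Real.Wallis.doubleFactorial_ratio_mul_eq_div_W {k : ℕ} (hk : 0 < k) :
    ((2 * k - 1)‼ / (k - 1)! : ℝ) * ((2 * k + 1)‼ / k !) = k * 4 ^ k / Wallis.W k := by
  have hA : ((2 * k)! : ℝ) = 2 ^ k * k ! * (2 * k - 1)‼ := by
    exact_mod_cast factorial_two_mul_eq_doubleFactorial k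
  have hB : ((2 * k + 1)‼ : ℝ) = (2 * k + 1) * (2 * k - 1)‼ := by
    exact_mod_cast doubleFactorial_add_one (2 * k)
  have hF : (k ! : ℝ) = k * (k - 1)! := by exact_mod_cast (mul_factorial_pred hk.ne').symm
  rw [Wallis.W_eq_factorial_ratio, hA, hB, hF,
    show (4 : ℝ) ^ k = 2 ^ (2 * k) by rw [pow_mul]; norm_num]
  have : (0 : ℝ) < k := by exact_mod_cast hk
  field_simp
  ring

theorem Real.Wallis.two_mul_le_pi_mul_div_W (k : ℕ) : 2 * k ≤ π * k / Wallis.W k := by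
  rw [le_div_iff₀ (Wallis.W_pos k)]
  nlinarith [Wallis.W_le k, (Nat.cast_nonneg k : (0 : ℝ) ≤ k)]

theorem Real.Wallis.pi_mul_div_W_le (k : ℕ) : π * k / Wallis.W k ≤ 2 * k + 1 := by
  have hk : (0 : ℝ) ≤ k := Nat.cast_nonneg k
  have hW := Wallis.le_W k
  rw [div_le_iff₀ (Wallis.W_pos k)]
  rw [div_mul_eq_mul_div, div_le_iff₀ (by positivity)] at hW
  nlinarith [pi_pos]

theorem sigmaTerm_eq {j m : ℕ} (hj : 0 < j) (hm : 0 < m) :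
    sigmaTerm (j + m + 1) j =
      64 * j * m / (3 * (j + m + 1) * (j + m) * Wallis.W j * Wallis.W m) := by
  have e1 : 2 * (j + m + 1) - 2 * j - 3 = 2 * m - 1 := by omega
  have e2 : j + m + 1 - j - 2 = m - 1 := by omega
  have e3 : 2 * (j + m + 1) - 2 * j - 1 = 2 * m + 1 := by omega
  have e4 : j + m + 1 - j - 1 = m := by omega
  have hpow : (2 : ℝ) ^ ((2 * (j + m + 1 : ℕ) : ℤ) - 7) = 4 ^ j * 4 ^ m / 32 := by
    rw [zpow_sub₀ two_ne_zero, ← Nat.cast_ofNat (n := 2) (R := ℤ), ← Nat.cast_mul, zpow_natCast,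
      show 2 * (j + m + 1) = 2 * j + 2 * m + 2 by ring, pow_add, pow_add, pow_mul, pow_mul]
    norm_num
    ring
  have hchoose : ((j + m + 1).choose 2 : ℝ) = (j + m + 1) * (j + m) / 2 := by
    rw [cast_choose_two]; push_cast; ring
  calc sigmaTerm (j + m + 1) j
      = 1 / (3 * ((j + m + 1).choose 2 : ℝ) * (2 : ℝ) ^ ((2 * (j + m + 1 : ℕ) : ℤ) - 7)) *
          (((2 * j - 1)‼ / (j - 1)! : ℝ) * ((2 * j + 1)‼ / j !)) *
          (((2 * m - 1)‼ / (m - 1)! : ℝ) * ((2 * m + 1)‼ / m !)) := by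
        rw [sigmaTerm, e1, e2, e3, e4]; push_cast; ring
    _ = _ := by
        rw [Wallis.doubleFactorial_ratio_mul_eq_div_W hj,
          Wallis.doubleFactorial_ratio_mul_eq_div_W hm, hpow, hchoose]
        have := Wallis.W_pos j
        have := Wallis.W_pos m
        have : (0 : ℝ) < j + m := by positivity
        field_simp
        ring

theorem abs_mul_div_sub_le_of_bounds {x y a b : ℝ} (hx : 1 ≤ x) (hy : 0 ≤ y)
    (ha : 2 * x ≤ a) (ha' : a ≤ 2 * x + 1) (hb : 2 * y ≤ b) (hb' : b ≤ 2 * y + 1) :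
    |a * b / ((x + y + 1) * (x + y)) - 4 * x * (y + 1) / (x + y + 1) ^ 2| ≤ 4 / (x + y + 1) := by
  have hs : 0 < x + y := by linarith
  have hN : 0 < x + y + 1 := by linarith
  have hab : 4 * x * y ≤ a * b := by
    linarith [mul_le_mul ha hb (by linarith) (by linarith)]
  have hab' : a * b ≤ (2 * x + 1) * (2 * y + 1) := mul_le_mul ha' hb' (by linarith) (by linarith)
  have hE : |a * b * (x + y + 1) - 4 * x * (y + 1) * (x + y)| ≤ 4 * (x + y + 1) * (x + y) := by
    rw [abs_le]
    constructor <;> nlinarith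
  calc |a * b / ((x + y + 1) * (x + y)) - 4 * x * (y + 1) / (x + y + 1) ^ 2|
      = |a * b * (x + y + 1) - 4 * x * (y + 1) * (x + y)| / ((x + y + 1) ^ 2 * (x + y)) := by
        rw [← abs_of_pos (by positivity : 0 < (x + y + 1) ^ 2 * (x + y)), ← abs_div]
        congr 1
        field_simp
    _ ≤ 4 * (x + y + 1) * (x + y) / ((x + y + 1) ^ 2 * (x + y)) := by gcongr
    _ = 4 / (x + y + 1) := by field_simp

/-- Uniform asymptotics `σ_n^(j) = (256/(3π²))·j(n-j)/n² + O(1/n)`. -/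
theorem sigma_asymptotics :
    ∃ C : ℝ, 0 < C ∧ ∀ n : ℕ, 3 ≤ n → ∀ j : ℕ, 1 ≤ j → j ≤ n - 2 →
      |sigmaTerm n j -
          256 / (3 * Real.pi ^ 2) * ((j : ℝ) * ((n : ℝ) - (j : ℝ))) / (n : ℝ) ^ 2| ≤
        C / (n : ℝ) := by
  refine ⟨10, by norm_num, fun n hn j hj hjn => ?_⟩
  obtain ⟨m, rfl⟩ : ∃ m, n = j + m + 1 := ⟨n - j - 1, by omega⟩
  have hm : 0 < m := by omega
  have hWj := Wallis.W_pos j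
  have hWm := Wallis.W_pos m
  have hπ : 9 < π ^ 2 := by nlinarith [pi_gt_three]
  have hdiff : sigmaTerm (j + m + 1) j -
        256 / (3 * π ^ 2) * ((j : ℝ) * (((j + m + 1 : ℕ) : ℝ) - j)) / ((j + m + 1 : ℕ) : ℝ) ^ 2 =
      64 / (3 * π ^ 2) * ((π * j / Wallis.W j) * (π * m / Wallis.W m) / ((j + m + 1) * (j + m)) -
        4 * j * (m + 1) / (j + m + 1) ^ 2) := by
    rw [sigmaTerm_eq hj hm]
    have : (0 : ℝ) < j + m := by positivity
    push_cast
    field_simp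
    ring
  rw [hdiff, abs_mul, abs_of_pos (by positivity)]
  push_cast
  have hbound := abs_mul_div_sub_le_of_bounds (by exact_mod_cast hj) m.cast_nonneg
    (Wallis.two_mul_le_pi_mul_div_W j) (Wallis.pi_mul_div_W_le j)
    (Wallis.two_mul_le_pi_mul_div_W m) (Wallis.pi_mul_div_W_le m)
  calc _ ≤ 64 / (3 * π ^ 2) * (4 / (j + m + 1)) := by gcongr
    _ ≤ 10 / (j + m + 1) := by
        rw [← mul_div_assoc, div_le_div_iff_of_pos_right (by positivity),
          div_mul_eq_mul_div, div_le_iff₀ (by positivity)]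
        linarith
end
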